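/- arXiv:0910.3872 — 2 statements merged into one kernel-verified Lean document; each statement's English description precedes it below -/
import Mathlib

section
/- Let n ≥ 1, let R : ℝ → Matrix (Fin n) (Fin n) ℝ be continuous with R(t) symmetric for every t, and let s > 0. Let U be a Lagrangian Jacobi solution along R with U(0) = 1 such that U(u) is invertible for every u ∈ [0, s], and let S be a Jacobi solution along R with S(0) = 1 and S(s) = 0. Then the matrix U'(0) − S'(0) is invertible and (U'(0) − S'(0))⁻¹ = ∫₀^{s} (U(u)ᵀ * U(u))⁻¹ du. -/
/-! The Wronskian `W(U, S) = U'ᵀ S - Uᵀ S'` of two Jacobi solutions is constant because `R` is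
symmetric, and at `0` it equals `D = U'(0) - S'(0)`, since `U'(0)` is symmetric for Lagrangian `U`.
Where `U` is invertible, the Lagrangian identity `(Uᵀ)⁻¹ U'ᵀ = U' U⁻¹` turns the derivative of
`U⁻¹ S` into `-(Uᵀ U)⁻¹ W(U, S) = -(Uᵀ U)⁻¹ D`. Integrating over `[0, s]`, from `U⁻¹ S = 1` at `0`
to `U⁻¹ S = 0` at `s`, gives `(∫₀ˢ (Uᵀ U)⁻¹) D = 1`. -/

open Matrix MeasureTheory

attribute [local instance] Matrix.normedAddCommGroup Matrix.normedSpace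

/-- A Jacobi solution along `R`: a twice continuously differentiable matrix-valued
map `Y` satisfying `Y'' + R Y = 0`. -/
def IsJacobi {n : ℕ} (R Y : ℝ → Matrix (Fin n) (Fin n) ℝ) : Prop :=
  ContDiff ℝ 2 Y ∧ ∀ t : ℝ, deriv (deriv Y) t + R t * Y t = 0

/-- A Lagrangian (self-conjugate) solution: the Wronskian `W(Y,Y)` vanishes. -/
def IsLagrangian {n : ℕ} (Y : ℝ → Matrix (Fin n) (Fin n) ℝ) : Prop :=
  ∀ t : ℝ, (deriv Y t)ᵀ * Y t = (Y t)ᵀ * deriv Y t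

section MatrixCalculus

variable {𝕜 : Type*} [NontriviallyNormedField 𝕜] {m : Type*} [Fintype m]
  {f g : 𝕜 → Matrix m m 𝕜} {f' g' : Matrix m m 𝕜} {t : 𝕜}

theorem HasDerivAt.matrix_transpose (hf : HasDerivAt f f' t) :
    HasDerivAt (fun t => (f t)ᵀ) f'ᵀ t :=
  hasDerivAt_pi.2 fun i => hasDerivAt_pi.2 fun j => hasDerivAt_pi.1 (hasDerivAt_pi.1 hf j) i

variable [DecidableEq m]

/- Differentiability only depends on the topology, so the product and inversion rules of normed
algebras apply through the operator norm, even though the ambient norm is the entrywise one. -/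
attribute [local instance] Matrix.linftyOpNormedRing Matrix.linftyOpNormedAlgebra

theorem HasDerivAt.matrix_mul (hf : HasDerivAt f f' t) (hg : HasDerivAt g g' t) :
    HasDerivAt (fun t => f t * g t) (f' * g t + f t * g') t :=
  hf.fun_mul hg

theorem HasDerivAt.matrix_inv [CompleteSpace 𝕜] (hf : HasDerivAt f f' t) (hft : IsUnit (f t)) :
    HasDerivAt (fun t => (f t)⁻¹) (-((f t)⁻¹ * f' * (f t)⁻¹)) t := by
  have : HasSummableGeomSeries (Matrix m m 𝕜) :=
    @instHasSummableGeomSeriesOfCompleteSpace _ _ (FiniteDimensional.complete 𝕜 _)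
  obtain ⟨u, hu⟩ := hft
  have hinv := hasFDerivAt_ringInverse (𝕜 := 𝕜) u
  rw [hu] at hinv
  have h := hinv.comp_hasDerivAt t hf
  simp only [Function.comp_def, ← nonsing_inv_eq_ringInverse, Matrix.coe_units_inv, hu] at h
  exact h

end MatrixCalculus

theorem intervalIntegral.integral_matrix_mul_const {l m n : Type*} [Fintype l] [Fintype m]
    [Fintype n] {F : ℝ → Matrix l m ℝ} {μ : Measure ℝ} [IsLocallyFiniteMeasure μ] {a b : ℝ}
    (hF : ContinuousOn F (Set.uIcc a b)) (D : Matrix m n ℝ) :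
    ∫ u in a..b, F u * D ∂μ = (∫ u in a..b, F u ∂μ) * D :=
  (mulRightLinearMap l ℝ D).toContinuousLinearMap.intervalIntegral_comp_comm hF.intervalIntegrable

theorem Matrix.inv_transpose_mul_transpose_eq_mul_inv {ι α : Type*} [Fintype ι] [DecidableEq ι]
    [CommRing α] {A B : Matrix ι ι α} (hAB : Bᵀ * A = Aᵀ * B) (hA : IsUnit A) :
    (Aᵀ)⁻¹ * Bᵀ = B * A⁻¹ := by
  have hA' : IsUnit A.det := (isUnit_iff_isUnit_det A).1 hA
  have hAt : IsUnit Aᵀ.det := by rwa [det_transpose]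
  calc (Aᵀ)⁻¹ * Bᵀ = (Aᵀ)⁻¹ * (Bᵀ * A) * A⁻¹ := by
        rw [Matrix.mul_assoc, Matrix.mul_assoc, mul_nonsing_inv _ hA', Matrix.mul_one]
    _ = B * A⁻¹ := by rw [hAB, ← Matrix.mul_assoc, nonsing_inv_mul _ hAt, Matrix.one_mul]

noncomputable def wronskian {ι : Type*} [Fintype ι] (X Y : ℝ → Matrix ι ι ℝ) (t : ℝ) :
    Matrix ι ι ℝ :=
  (deriv X t)ᵀ * Y t - (X t)ᵀ * deriv Y t

section Jacobi

variable {n : ℕ} {R X Y U S : ℝ → Matrix (Fin n) (Fin n) ℝ}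

theorem IsJacobi.hasDerivAt (hY : IsJacobi R Y) (t : ℝ) : HasDerivAt Y (deriv Y t) t :=
  ((hY.1.differentiable two_ne_zero) t).hasDerivAt

theorem IsJacobi.hasDerivAt_deriv (hY : IsJacobi R Y) (t : ℝ) :
    HasDerivAt (deriv Y) (-(R t * Y t)) t := by
  have hY' : ContDiff ℝ 1 (deriv Y) := (contDiff_succ_iff_deriv.1 hY.1).2.2
  rw [← eq_neg_of_add_eq_zero_left (hY.2 t)]
  exact ((hY'.differentiable one_ne_zero) t).hasDerivAt

theorem IsJacobi.hasDerivAt_wronskian (hR : ∀ t, (R t)ᵀ = R t) (hX : IsJacobi R X)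
    (hY : IsJacobi R Y) (t : ℝ) : HasDerivAt (wronskian X Y) 0 t := by
  refine (((hX.hasDerivAt_deriv t).matrix_transpose.matrix_mul (hY.hasDerivAt t)).sub
    ((hX.hasDerivAt t).matrix_transpose.matrix_mul (hY.hasDerivAt_deriv t))).congr_deriv ?_
  simp only [transpose_neg, transpose_mul, hR, Matrix.neg_mul, Matrix.mul_neg, Matrix.mul_assoc]
  abel

theorem IsJacobi.wronskian_eq (hR : ∀ t, (R t)ᵀ = R t) (hX : IsJacobi R X)
    (hY : IsJacobi R Y) (t : ℝ) : wronskian X Y t = wronskian X Y 0 :=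
  is_const_of_deriv_eq_zero (fun x => (hX.hasDerivAt_wronskian hR hY x).differentiableAt)
    (fun x => (hX.hasDerivAt_wronskian hR hY x).deriv) t 0

end Jacobi

theorem IsLagrangian.hasDerivAt_inv_mul {n : ℕ} {U S : ℝ → Matrix (Fin n) (Fin n) ℝ} {t : ℝ}
    (hUL : IsLagrangian U) (hU : HasDerivAt U (deriv U t) t) (hS : HasDerivAt S (deriv S t) t)
    (hUt : IsUnit (U t)) :
    HasDerivAt (fun t => (U t)⁻¹ * S t) (-(((U t)ᵀ * U t)⁻¹ * wronskian U S t)) t := by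
  have hUt' : IsUnit (U t)ᵀ.det := by rw [det_transpose]; exact (isUnit_iff_isUnit_det _).1 hUt
  refine ((hU.matrix_inv hUt).matrix_mul hS).congr_deriv ?_
  calc -((U t)⁻¹ * deriv U t * (U t)⁻¹) * S t + (U t)⁻¹ * deriv S t
      = -((U t)⁻¹ * (((U t)ᵀ)⁻¹ * (deriv U t)ᵀ) * S t) +
          (U t)⁻¹ * (((U t)ᵀ)⁻¹ * (U t)ᵀ) * deriv S t := by
        rw [inv_transpose_mul_transpose_eq_mul_inv (hUL t) hUt, nonsing_inv_mul _ hUt',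
          Matrix.mul_one]
        simp only [Matrix.neg_mul, Matrix.mul_assoc]
    _ = -(((U t)ᵀ * U t)⁻¹ * wronskian U S t) := by
        rw [wronskian, Matrix.mul_inv_rev]
        simp only [Matrix.mul_sub, Matrix.mul_assoc]
        abel

theorem inv_deriv_diff_eq_integral_general {n : ℕ}
    (R : ℝ → Matrix (Fin n) (Fin n) ℝ)
    (hRsym : ∀ t : ℝ, (R t)ᵀ = R t)
    (s : ℝ) (hs : 0 < s)
    (U : ℝ → Matrix (Fin n) (Fin n) ℝ)
    (hU : IsJacobi R U) (hUL : IsLagrangian U) (hU0 : U 0 = 1)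
    (hUinv : ∀ u ∈ Set.Icc (0 : ℝ) s, IsUnit (U u))
    (S : ℝ → Matrix (Fin n) (Fin n) ℝ)
    (hS : IsJacobi R S) (hS0 : S 0 = 1) (hSs : S s = 0) :
    IsUnit (deriv U 0 - deriv S 0) ∧
      (deriv U 0 - deriv S 0)⁻¹ = ∫ u in (0 : ℝ)..s, ((U u)ᵀ * U u)⁻¹ := by
  set D := deriv U 0 - deriv S 0
  set F : ℝ → Matrix (Fin n) (Fin n) ℝ := fun u => ((U u)ᵀ * U u)⁻¹
  have hUinv' : ∀ t ∈ Set.uIcc 0 s, IsUnit (U t) := by rwa [Set.uIcc_of_le hs.le]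
  have hW : ∀ t, wronskian U S t = D := fun t => by
    have hU'0 : (deriv U 0)ᵀ = deriv U 0 := by simpa [hU0] using hUL 0
    rw [hU.wronskian_eq hRsym hS t, wronskian, hU0, hS0, hU'0, transpose_one, Matrix.mul_one,
      Matrix.one_mul]
  have hG : ∀ t ∈ Set.uIcc 0 s, HasDerivAt (fun t => (U t)⁻¹ * S t) (-(F t * D)) t := by
    intro t ht
    simpa only [hW] using hUL.hasDerivAt_inv_mul (hU.hasDerivAt t) (hS.hasDerivAt t) (hUinv' t ht)
  have hF : ContinuousOn F (Set.uIcc 0 s) := by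
    intro t ht
    have hUt := hUinv' t ht
    exact (((hU.hasDerivAt t).matrix_transpose.matrix_mul (hU.hasDerivAt t)).matrix_inv
      (((isUnit_transpose _).2 hUt).mul hUt)).continuousAt.continuousWithinAt
  have hFD : (∫ u in (0 : ℝ)..s, F u) * D = 1 := by
    have hFTC := intervalIntegral.integral_eq_sub_of_hasDerivAt hG
      ((hF.mul continuousOn_const).neg.intervalIntegrable)
    simp only [hU0, hS0, hSs, inv_one, Matrix.mul_zero, Matrix.one_mul, zero_sub,
      intervalIntegral.integral_neg, neg_inj] at hFTC
    rw [← intervalIntegral.integral_matrix_mul_const hF D, hFTC]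
  exact ⟨(isUnit_iff_isUnit_det D).2 (isUnit_det_of_left_inverse hFD), inv_eq_left_inv hFD⟩

/-- `(U'(0) − S'(0))⁻¹ = ∫₀ˢ (UᵀU)⁻¹(u) du` for a nonsingular Lagrangian solution `U`
with `U(0) = 1` and the Jacobi solution `S` with `S(0) = 1`, `S(s) = 0`. -/
theorem inv_deriv_diff_eq_integral {n : ℕ} (hn : 1 ≤ n)
    (R : ℝ → Matrix (Fin n) (Fin n) ℝ) (hRc : Continuous R)
    (hRsym : ∀ t : ℝ, (R t)ᵀ = R t)
    (s : ℝ) (hs : 0 < s)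
    (U : ℝ → Matrix (Fin n) (Fin n) ℝ)
    (hU : IsJacobi R U) (hUL : IsLagrangian U) (hU0 : U 0 = 1)
    (hUinv : ∀ u ∈ Set.Icc (0 : ℝ) s, IsUnit (U u))
    (S : ℝ → Matrix (Fin n) (Fin n) ℝ)
    (hS : IsJacobi R S) (hS0 : S 0 = 1) (hSs : S s = 0) :
    IsUnit (deriv U 0 - deriv S 0) ∧
      (deriv U 0 - deriv S 0)⁻¹ = ∫ u in (0 : ℝ)..s, ((U u)ᵀ * U u)⁻¹ :=
  inv_deriv_diff_eq_integral_general R hRsym s hs U hU hUL hU0 hUinv S hS hS0 hSs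
end

section
/- Let X be a metric space, δ ≥ 0, and set ℓ := δ + 1. Let c₁, c₂ : ℝ → X be geodesics with c₁(0) = c₂(0) = p, satisfying d(c₁(ℓ), c₂(−ℓ)) ≤ 1 and d(c₁(−ℓ), c₂(ℓ)) ≤ 1. Let a₁, a₂ > ℓ, let a ≥ 0, and let c : [0, a] → X be a geodesic with c(0) = c₁(a₁) and c(a) = c₂(a₂). Assume that for every t ∈ [0, a] the distance from c(t) to the set c₁([0, a₁]) ∪ c₂([0, a₂]) is at most δ. Then there exists t₀ ∈ [0, a] such that d(p, c(t₀)) ≤ 2δ + 1. -/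
open Metric Set

/-!
Along `c` the difference of the distances to the two rays `c₁ [0, a₁]` and `c₂ [0, a₂]` changes
sign, so some point `x = c t₀` is equally far, at most `δ`, from both rays: it is within `δ + ¼` of
points `c₁ s` and `c₂ u`, which are therefore within `2δ + ½` of each other. Because `c₁` and `c₂`
almost continue each other through `p` (the geodesic lines pass within `1` of each other at
distance `δ + 1` from `p` on both sides), two such close points force `min s u ≤ δ + ¾`, and then
`d(p, x) ≤ min s u + δ + ¼ ≤ 2δ + 1`.
-/

section

variable {X : Type*} [PseudoMetricSpace X]

theorem Metric.infDist_union {x : X} {A B : Set X} (hA : A.Nonempty) (hB : B.Nonempty) :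
    infDist x (A ∪ B) = min (infDist x A) (infDist x B) := by
  simp only [infDist, infEDist_union,
    ENNReal.toReal_min (infEDist_ne_top hA) (infEDist_ne_top hB)]

theorem exists_infDist_eq_of_continuousOn {f : ℝ → X} {A B : Set X} {a b : ℝ} (hab : a ≤ b)
    (hf : ContinuousOn f (Icc a b)) (ha : f a ∈ A) (hb : f b ∈ B) :
    ∃ t ∈ Icc a b, infDist (f t) A = infDist (f t) B := by
  have hcont : ContinuousOn (fun t => infDist (f t) A - infDist (f t) B) (Icc a b) :=
    (continuous_infDist_pt A |>.comp_continuousOn hf).sub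
      (continuous_infDist_pt B |>.comp_continuousOn hf)
  have hsign : (0 : ℝ) ∈ Icc (infDist (f a) A - infDist (f a) B)
      (infDist (f b) A - infDist (f b) B) := by
    rw [infDist_zero_of_mem ha, infDist_zero_of_mem hb]
    exact ⟨by linarith [infDist_nonneg (x := f a) (s := B)],
      by linarith [infDist_nonneg (x := f b) (s := A)]⟩
  obtain ⟨t, ht, hzero⟩ := intermediate_value_Icc hab hcont hsign
  exact ⟨t, ht, sub_eq_zero.mp hzero⟩

section TwoLines

variable {c₁ c₂ : ℝ → X} {ℓ η : ℝ}

theorem two_mul_min_le_dist_add (hc₁ : Isometry c₁) (hc₂ : Isometry c₂)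
    (hd₁ : dist (c₁ ℓ) (c₂ (-ℓ)) ≤ η) (hd₂ : dist (c₁ (-ℓ)) (c₂ ℓ) ≤ η) {s u : ℝ}
    (hsu : dist (c₁ s) (c₂ u) + η < 2 * ℓ) :
    2 * min s u ≤ dist (c₁ s) (c₂ u) + η := by
  have hu : u + ℓ ≤ dist (c₁ s) (c₂ u) + |s - ℓ| + η :=
    calc u + ℓ ≤ dist (c₂ u) (c₂ (-ℓ)) := by
          rw [hc₂.dist_eq, Real.dist_eq, sub_neg_eq_add]; exact le_abs_self _
      _ ≤ dist (c₂ u) (c₁ s) + dist (c₁ s) (c₁ ℓ) + dist (c₁ ℓ) (c₂ (-ℓ)) := dist_triangle4 ..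
      _ ≤ dist (c₁ s) (c₂ u) + |s - ℓ| + η := by
          rw [dist_comm (c₂ u), hc₁.dist_eq, Real.dist_eq]; linarith
  have hs : s + ℓ ≤ dist (c₁ s) (c₂ u) + |u - ℓ| + η :=
    calc s + ℓ ≤ dist (c₁ s) (c₁ (-ℓ)) := by
          rw [hc₁.dist_eq, Real.dist_eq, sub_neg_eq_add]; exact le_abs_self _
      _ ≤ dist (c₁ s) (c₂ u) + dist (c₂ u) (c₂ ℓ) + dist (c₂ ℓ) (c₁ (-ℓ)) := dist_triangle4 ..
      _ ≤ dist (c₁ s) (c₂ u) + |u - ℓ| + η := by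
          rw [dist_comm (c₂ ℓ), hc₂.dist_eq, Real.dist_eq]; linarith
  -- if both `s` and `u` exceed `ℓ`, adding `hu` and `hs` contradicts `hsu`
  cases abs_cases (s - ℓ) <;> cases abs_cases (u - ℓ) <;>
    linarith [min_le_left s u, min_le_right s u]

theorem dist_center_lt_of_near_rays (hc₁ : Isometry c₁) (hc₂ : Isometry c₂)
    (h₀ : c₁ 0 = c₂ 0) (hd₁ : dist (c₁ ℓ) (c₂ (-ℓ)) ≤ η) (hd₂ : dist (c₁ (-ℓ)) (c₂ ℓ) ≤ η)
    {r : ℝ} (hr : 2 * r + η ≤ 2 * ℓ) {x : X} {s u : ℝ} (hs₀ : 0 ≤ s) (hu₀ : 0 ≤ u)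
    (hs : dist x (c₁ s) < r) (hu : dist x (c₂ u) < r) :
    dist (c₁ 0) x < 2 * r + η / 2 := by
  have hsu : dist (c₁ s) (c₂ u) < 2 * r :=
    calc dist (c₁ s) (c₂ u) ≤ dist (c₁ s) x + dist x (c₂ u) := dist_triangle ..
      _ < 2 * r := by rw [dist_comm]; linarith
  have hmin := two_mul_min_le_dist_add hc₁ hc₂ hd₁ hd₂ (by linarith)
  rcases min_choice s u with hmin_eq | hmin_eq <;> rw [hmin_eq] at hmin
  · calc dist (c₁ 0) x ≤ dist (c₁ 0) (c₁ s) + dist (c₁ s) x := dist_triangle ..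
      _ < 2 * r + η / 2 := by
          rw [hc₁.dist_eq, Real.dist_eq, zero_sub, abs_neg, abs_of_nonneg hs₀, dist_comm]
          linarith
  · calc dist (c₁ 0) x ≤ dist (c₂ 0) (c₂ u) + dist (c₂ u) x := h₀ ▸ dist_triangle ..
      _ < 2 * r + η / 2 := by
          rw [hc₂.dist_eq, Real.dist_eq, zero_sub, abs_neg, abs_of_nonneg hu₀, dist_comm]
          linarith

end TwoLines

end

/-- In a space where the given triangle is `δ`-thin, a geodesic joining points far
out on two nearly opposite rays through `p` passes within `2δ + 1` of `p`. -/
theorem geodesic_passes_near_center {X : Type*} [MetricSpace X]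
    (δ : ℝ) (hδ : 0 ≤ δ) (p : X)
    (c₁ c₂ : ℝ → X)
    (hc₁ : ∀ a b : ℝ, dist (c₁ a) (c₁ b) = |a - b|)
    (hc₂ : ∀ a b : ℝ, dist (c₂ a) (c₂ b) = |a - b|)
    (hp₁ : c₁ 0 = p) (hp₂ : c₂ 0 = p)
    (hd₁ : dist (c₁ (δ + 1)) (c₂ (-(δ + 1))) ≤ 1)
    (hd₂ : dist (c₁ (-(δ + 1))) (c₂ (δ + 1)) ≤ 1)
    (a₁ a₂ : ℝ) (ha₁ : δ + 1 < a₁) (ha₂ : δ + 1 < a₂)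
    (a : ℝ) (ha : 0 ≤ a)
    (c : ℝ → X)
    (hc : ∀ s ∈ Set.Icc (0 : ℝ) a, ∀ t ∈ Set.Icc (0 : ℝ) a, dist (c s) (c t) = |s - t|)
    (hstart : c 0 = c₁ a₁) (hend : c a = c₂ a₂)
    (hthin : ∀ t ∈ Set.Icc (0 : ℝ) a,
      infDist (c t) (c₁ '' Set.Icc (0 : ℝ) a₁ ∪ c₂ '' Set.Icc (0 : ℝ) a₂) ≤ δ) :
    ∃ t₀ ∈ Set.Icc (0 : ℝ) a, dist p (c t₀) ≤ 2 * δ + 1 := by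
  have hA : c₁ a₁ ∈ c₁ '' Icc 0 a₁ := mem_image_of_mem _ ⟨by linarith, le_rfl⟩
  have hB : c₂ a₂ ∈ c₂ '' Icc 0 a₂ := mem_image_of_mem _ ⟨by linarith, le_rfl⟩
  have hcont : ContinuousOn c (Icc 0 a) :=
    (LipschitzOnWith.of_dist_le_mul (K := 1) fun s hs t ht => by
      simp [hc s hs t ht, Real.dist_eq]).continuousOn
  obtain ⟨t₀, ht₀, heq⟩ :=
    exists_infDist_eq_of_continuousOn ha hcont (hstart ▸ hA) (hend ▸ hB)
  have hnear : infDist (c t₀) (c₁ '' Icc 0 a₁) < δ + 1 / 4 := by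
    have := hthin t₀ ht₀
    rw [infDist_union ⟨_, hA⟩ ⟨_, hB⟩, ← heq, min_self] at this
    linarith
  obtain ⟨_, ⟨s, hs, rfl⟩, hcs⟩ := (infDist_lt_iff ⟨_, hA⟩).mp hnear
  obtain ⟨_, ⟨u, hu, rfl⟩, hcu⟩ := (infDist_lt_iff ⟨_, hB⟩).mp (heq ▸ hnear)
  have hiso₁ : Isometry c₁ := .of_dist_eq fun a b => (hc₁ a b).trans (Real.dist_eq a b).symm
  have hiso₂ : Isometry c₂ := .of_dist_eq fun a b => (hc₂ a b).trans (Real.dist_eq a b).symm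
  have hcenter := dist_center_lt_of_near_rays hiso₁ hiso₂ (hp₁.trans hp₂.symm) hd₁ hd₂
    (by linarith) hs.1 hu.1 hcs hcu
  exact ⟨t₀, ht₀, by rw [← hp₁]; linarith⟩
end
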